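/- With θ(x,q) = (x;q)_∞ (q/x;q)_∞ / (q;q)_∞^2, for every positive integer h, 0 < |q| < 1, and x ∈ C^× not an integral power of q, one has θ(x,q)/θ(x,q^h) = Π_{s=1}^{h−1} θ(q^s x, q^h)/θ(q^s, q^h). -/

import Mathlib

/-!
Grouping the factors `1 - y q ^ n` of `(y; q)_∞` by `n mod h` gives
`(y; q)_∞ = ∏_{s < h} (q ^ s y; q ^ h)_∞`. Applied to `x`, `q / x` and `q`, and pairing the factor
`s` with `h - s`, this writes the numerator of `θ(x, q)` as the product over `s < h` of the
numerators of `θ(q ^ s x, q ^ h)`, and `(q; q)_∞ ^ 2` as `(q ^ h; q ^ h)_∞ ^ 2` times the product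
over `0 < s < h` of the numerators of `θ(q ^ s, q ^ h)`. The factor `s = 0` of the first product
is the numerator of `θ(x, q ^ h)`.
-/

open scoped BigOperators

noncomputable def qPoch (x q : ℂ) : ℂ := ∏' n : ℕ, (1 - x * q ^ n)

noncomputable def theta (x q : ℂ) : ℂ := qPoch x q * qPoch (q / x) q / (qPoch q q) ^ 2

open Finset

section QPochhammer

variable {q : ℂ}

lemma summable_norm_mul_pow (y : ℂ) (hq : ‖q‖ < 1) : Summable fun n : ℕ ↦ ‖y * q ^ n‖ := by
  simpa [norm_mul, norm_pow] using
    (summable_geometric_of_lt_one (norm_nonneg q) hq).mul_left ‖y‖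

lemma multipliable_one_sub_mul_pow (y : ℂ) (hq : ‖q‖ < 1) :
    Multipliable fun n : ℕ ↦ 1 - y * q ^ n := by
  simpa [sub_eq_add_neg] using multipliable_one_add_of_summable (f := fun n ↦ -(y * q ^ n))
    (by simpa using summable_norm_mul_pow y hq)

lemma qPoch_ne_zero {y : ℂ} (hq : ‖q‖ < 1) (hy : ∀ n : ℕ, y * q ^ n ≠ 1) : qPoch y q ≠ 0 := by
  simpa [qPoch, sub_eq_add_neg] using tprod_one_add_ne_zero_of_summable
    (fun n ↦ by simpa [← sub_eq_add_neg, sub_eq_zero] using (hy n).symm)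
    (by simpa using summable_norm_mul_pow y hq)

lemma qPoch_self_ne_zero (hq : ‖q‖ < 1) : qPoch q q ≠ 0 :=
  qPoch_ne_zero hq fun n h ↦ by
    have hn := congrArg norm h
    rw [← pow_succ', norm_pow, norm_one] at hn
    exact (pow_lt_one₀ (norm_nonneg q) hq n.succ_ne_zero).ne hn

lemma qPoch_mul_qPoch_div_ne_zero {x : ℂ} (hq : ‖q‖ < 1) (hx : ∀ n : ℤ, x ≠ q ^ n) :
    qPoch x q * qPoch (q / x) q ≠ 0 := by
  refine mul_ne_zero (qPoch_ne_zero hq fun n h ↦ hx (-n) ?_) (qPoch_ne_zero hq fun n h ↦ ?_)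
  · rw [zpow_neg, zpow_natCast]
    exact eq_inv_of_mul_eq_one_left h
  · have hx0 : x ≠ 0 := by rintro rfl; simp at h
    apply hx (n + 1 : ℕ)
    rw [zpow_natCast, pow_succ']
    field_simp at h
    exact h.symm

lemma qPoch_eq_prod_range (y : ℂ) (hq : ‖q‖ < 1) {h : ℕ} (hh : 0 < h) :
    qPoch y q = ∏ s ∈ range h, qPoch (q ^ s * y) (q ^ h) := by
  have : NeZero h := ⟨hh.ne'⟩
  let e : Fin h × ℕ ≃ ℕ := (Equiv.prodComm _ _).trans (Nat.divModEquiv h).symm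
  have he : ∀ p : Fin h × ℕ, 1 - y * q ^ e p = 1 - q ^ (p.1 : ℕ) * y * (q ^ h) ^ p.2 := by
    rintro ⟨s, m⟩
    show 1 - y * q ^ (m * h + s) = _
    rw [pow_add, pow_mul']
    ring
  have hQ : ‖q ^ h‖ < 1 := by
    simpa using pow_lt_one₀ (norm_nonneg q) hq hh.ne'
  have hmul : Multipliable fun p : Fin h × ℕ ↦ 1 - q ^ (p.1 : ℕ) * y * (q ^ h) ^ p.2 :=
    (e.multipliable_iff.mpr (multipliable_one_sub_mul_pow y hq)).congr he
  have hfiber : ∀ s : Fin h, Multipliable fun m : ℕ ↦ 1 - q ^ (s : ℕ) * y * (q ^ h) ^ m :=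
    fun s ↦ multipliable_one_sub_mul_pow _ hQ
  rw [qPoch, ← e.tprod_eq, tprod_congr he, ← Fin.prod_univ_eq_prod_range,
    ← tprod_fintype (L := SummationFilter.unconditional _)]
  exact hmul.tprod_prod' hfiber

end QPochhammer

section Theta

variable {q : ℂ} {h : ℕ}

lemma qPoch_mul_qPoch_div_eq_prod_range (x : ℂ) (hq0 : q ≠ 0) (hq : ‖q‖ < 1) (hh : 0 < h) :
    qPoch x q * qPoch (q / x) q =
      ∏ s ∈ range h, qPoch (q ^ s * x) (q ^ h) * qPoch (q ^ h / (q ^ s * x)) (q ^ h) := by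
  rw [prod_mul_distrib, qPoch_eq_prod_range x hq hh, qPoch_eq_prod_range (q / x) hq hh,
    ← prod_range_reflect (fun s ↦ qPoch (q ^ s * (q / x)) (q ^ h))]
  -- reversed, the factor `(q ^ (s + 1) / x; q ^ h)` of `(q / x; q)` is `(q ^ h / (q ^ s * x); q ^ h)`
  refine congrArg _ (prod_congr rfl fun s hs ↦ congrArg (qPoch · _) ?_)
  have hpow : q ^ h = q ^ (h - 1 - s) * q * q ^ s := by
    rw [← pow_succ, ← pow_add]
    congr 1
    have := mem_range.mp hs
    omega
  rw [hpow]
  field_simp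

lemma sq_qPoch_self_eq_prod_Ico (hq0 : q ≠ 0) (hq : ‖q‖ < 1) (hh : 0 < h) :
    qPoch q q ^ 2 = qPoch (q ^ h) (q ^ h) ^ 2 *
      ∏ s ∈ Ico 1 h, qPoch (q ^ s) (q ^ h) * qPoch (q ^ h / q ^ s) (q ^ h) := by
  have hsplit : qPoch q q = (∏ s ∈ Ico 1 h, qPoch (q ^ s) (q ^ h)) * qPoch (q ^ h) (q ^ h) := by
    simp_rw [qPoch_eq_prod_range q hq hh, ← pow_succ, range_eq_Ico]
    rw [prod_Ico_add' (fun s ↦ qPoch (q ^ s) (q ^ h)), prod_Ico_succ_top hh]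
  have hreflect : ∏ s ∈ Ico 1 h, qPoch (q ^ h / q ^ s) (q ^ h) =
      ∏ s ∈ Ico 1 h, qPoch (q ^ s) (q ^ h) := by
    have := prod_Ico_reflect (fun s ↦ qPoch (q ^ s) (q ^ h)) 1 (Nat.le_succ h)
    rw [Nat.add_sub_cancel_left, Nat.add_sub_cancel] at this
    rw [← this]
    refine prod_congr rfl fun s hs ↦ ?_
    rw [pow_sub₀ q hq0 (mem_Ico.mp hs).2.le, div_eq_mul_inv]
  rw [prod_mul_distrib, hreflect, hsplit]
  ring

end Theta

theorem theta_ratio_general (q x : ℂ) (h : ℕ) (hh : 0 < h)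
    (hq0 : 0 < ‖q‖) (hq1 : ‖q‖ < 1)
    (hxq : ∀ n : ℤ, x ≠ q ^ n) :
    theta x q / theta x (q ^ h) =
      ∏ s ∈ Finset.Ico 1 h, theta (q ^ s * x) (q ^ h) / theta (q ^ s) (q ^ h) := by
  have hq : q ≠ 0 := norm_pos_iff.mp hq0
  have hQ : ‖q ^ h‖ < 1 := by simpa using pow_lt_one₀ (norm_nonneg q) hq1 hh.ne'
  have hP := qPoch_self_ne_zero hQ
  have hN := qPoch_mul_qPoch_div_ne_zero hQ fun n ↦ by
    rw [← zpow_natCast, ← zpow_mul]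
    exact hxq _
  simp only [theta]
  rw [qPoch_mul_qPoch_div_eq_prod_range x hq hq1 hh, sq_qPoch_self_eq_prod_Ico hq hq1 hh,
    prod_range_eq_mul_Ico _ hh, pow_zero, one_mul,
    prod_congr rfl fun s _ ↦ div_div_div_cancel_right₀ (pow_ne_zero 2 hP) _ _, prod_div_distrib]
  field_simp
  exact mul_div_mul_left _ _ hN

theorem theta_ratio (q x : ℂ) (h : ℕ) (hh : 0 < h)
    (hq0 : 0 < ‖q‖) (hq1 : ‖q‖ < 1) (hx : x ≠ 0)
    (hxq : ∀ n : ℤ, x ≠ q ^ n) :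
    theta x q / theta x (q ^ h) =
      ∏ s ∈ Finset.Ico 1 h, theta (q ^ s * x) (q ^ h) / theta (q ^ s) (q ^ h) :=
  theta_ratio_general q x h hh hq0 hq1 hxq
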